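/- Let A be an n×n integer matrix with Δ = |det(A)| > 0 and let b ∈ ℤ^n. Then there exists y ∈ ℤ^n with y ≥ 0 componentwise, b − y ∈ A·ℤ^n, and ∑_{k=1}^{n} y_k ≤ Δ − 1. -/

import Mathlib

/-!
The columns of `A` span a sublattice `L` of `ℤⁿ` of index `Δ = |det A|`. Write a nonnegative
residue `y` of `b` as a sum of `∑ yₖ` unit vectors. If there are at least `Δ` of them, then
pigeonhole on the `Δ + 1` prefix sums in `ℤⁿ / L` yields a nonempty block of them summing into
`L`; removing it gives a residue of `b` with smaller coordinate sum. Starting from `b mod Δ`,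
this descent ends with `∑ yₖ < Δ`.
-/

open Matrix

theorem List.exists_infix_ne_nil_map_sum_eq_zero {α G : Type*} [AddLeftCancelMonoid G] [Finite G]
    (f : α → G) (l : List α) (hl : Nat.card G ≤ l.length) :
    ∃ l' : List α, l' <:+: l ∧ l' ≠ [] ∧ (l'.map f).sum = 0 := by
  have hprefix : ¬ (fun i : Fin (Nat.card G + 1) => ((l.take i).map f).sum).Injective := fun h => by
    simpa using Nat.card_le_card_of_injective _ h
  obtain ⟨i, j, hij, hne⟩ := Function.not_injective_iff.mp hprefix
  wlog hlt : i < j generalizing i j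
  · exact this j i hij.symm hne.symm (lt_of_le_of_ne (not_lt.mp hlt) hne.symm)
  refine ⟨(l.take j).drop i, (List.drop_suffix _ _).isInfix.trans (List.take_prefix _ _).isInfix,
    ?_, ?_⟩
  · have : (i : ℕ) < ((l.take j).length) := by
      simp only [List.length_take]; omega
    simpa [← List.length_pos_iff] using this
  · have hsplit := congrArg (fun l' => (l'.map f).sum) (List.take_append_drop i (l.take j))
    have hle : (i : ℕ) ≤ j := hlt.le
    simp only [List.take_take, min_eq_left hle, List.map_append, List.sum_append] at hsplit
    rw [hij] at hsplit
    exact left_eq_add.mp hsplit.symm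

theorem Multiset.exists_le_ne_zero_map_sum_eq_zero {α G : Type*} [AddCancelCommMonoid G]
    [Finite G] (f : α → G) (s : Multiset α) (hs : Nat.card G ≤ card s) :
    ∃ t ≤ s, t ≠ 0 ∧ (t.map f).sum = 0 := by
  induction s using Quotient.inductionOn with
  | h l =>
    obtain ⟨l', hinfix, hne, hsum⟩ := l.exists_infix_ne_nil_map_sum_eq_zero f hs
    exact ⟨l', Multiset.coe_le.mpr hinfix.sublist.subperm, by simpa using hne, by simpa using hsum⟩

theorem Multiset.sum_map_single_one {ι R : Type*} [DecidableEq ι] [AddCommMonoidWithOne R]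
    (m : Multiset ι) : (m.map fun i => (Pi.single i 1 : ι → R)).sum = fun i => (m.count i : R) := by
  induction m using Multiset.induction_on with
  | empty => ext; simp
  | cons a m ih =>
    ext i
    simp [ih, Multiset.count_cons, Pi.single_apply, eq_comm, add_comm]

namespace AddSubgroup

variable {ι : Type*} (L : AddSubgroup (ι → ℤ)) [L.FiniteIndex] (b : ι → ℤ)

-- A nonnegative integer vector is encoded by the multiset of unit-vector indices it is a sum of.

theorem exists_sub_count_mem [Finite ι] [DecidableEq ι] :
    ∃ m : Multiset ι, b - (fun i => (m.count i : ℤ)) ∈ L := by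
  have hL : (L.index : ℤ) ≠ 0 := by exact_mod_cast FiniteIndex.index_ne_zero
  refine ⟨Finsupp.toMultiset (Finsupp.equivFunOnFinite.symm fun i => (b i % L.index).toNat), ?_⟩
  convert L.nsmul_index_mem (fun i => b i / L.index) using 1
  ext i
  simp only [Pi.sub_apply, Finsupp.count_toMultiset, Finsupp.equivFunOnFinite_symm_apply_apply,
    Pi.smul_apply, nsmul_eq_mul]
  rw [Int.toNat_of_nonneg (Int.emod_nonneg _ hL), Int.emod_def]
  ring

theorem exists_sub_count_mem_card_lt_index [DecidableEq ι] (m : Multiset ι)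
    (hm : b - (fun i => (m.count i : ℤ)) ∈ L) :
    ∃ m' : Multiset ι, b - (fun i => (m'.count i : ℤ)) ∈ L ∧ Multiset.card m' < L.index := by
  induction m using Multiset.strongInductionOn with
  | _ m ih =>
    by_cases hcard : Multiset.card m < L.index
    · exact ⟨m, hm, hcard⟩
    obtain ⟨t, htm, ht0, hsum⟩ := m.exists_le_ne_zero_map_sum_eq_zero
      (fun i => (QuotientAddGroup.mk (Pi.single i 1 : ι → ℤ) : (ι → ℤ) ⧸ L)) (not_lt.mp hcard)
    have ht : (fun i => (t.count i : ℤ)) ∈ L := by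
      rw [← Multiset.sum_map_single_one, ← QuotientAddGroup.eq_zero_iff,
        ← QuotientAddGroup.mk'_apply, map_multiset_sum, Multiset.map_map]
      exact hsum
    refine ih (m - t) ?_ ?_
    · calc m - t < m - t + t := lt_add_of_pos_right _ (pos_iff_ne_zero.mpr ht0)
        _ = m := tsub_add_cancel_of_le htm
    · convert L.add_mem hm ht using 1
      ext i
      simp only [Pi.sub_apply, Pi.add_apply, Multiset.count_sub,
        Nat.cast_sub (Multiset.count_le_of_le i htm)]
      ring

theorem exists_nonneg_sub_mem_sum_lt_index [Fintype ι] :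
    ∃ y : ι → ℤ, (∀ i, 0 ≤ y i) ∧ b - y ∈ L ∧ ∑ i, y i < L.index := by
  classical
  obtain ⟨m, hm⟩ := L.exists_sub_count_mem b
  obtain ⟨m', hm', hcard⟩ := L.exists_sub_count_mem_card_lt_index b m hm
  refine ⟨_, fun i => Nat.cast_nonneg _, hm', ?_⟩
  rw [← Nat.cast_sum, Multiset.sum_count_eq_card fun i _ => Finset.mem_univ i]
  exact_mod_cast hcard

end AddSubgroup

theorem Matrix.index_range_mulVecLin {n : Type*} [Fintype n] [DecidableEq n] (A : Matrix n n ℤ)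
    (hA : A.det ≠ 0) : (LinearMap.range A.mulVecLin).toAddSubgroup.index = A.det.natAbs := by
  have hinj : Function.Injective A.mulVecLin := isLeftRegular_iff_mulVec_injective.mp
    (isRegular_of_isLeftRegular_det (IsRegular.of_ne_zero hA).left).left
  calc (LinearMap.range A.mulVecLin).toAddSubgroup.index
      = Nat.card ((n → ℤ) ⧸ LinearMap.range A.mulVecLin) := rfl
    _ = _ := (Submodule.natAbs_det_equiv _ (LinearEquiv.ofInjective _ hinj)).symm
    _ = A.det.natAbs := by rw [← LinearMap.det_toLin', toLin'_apply']; rfl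

/-- **Lemma 5.** For an `n × n` integer matrix `A` with `Δ = |det A| > 0` and
any `b ∈ ℤ^n`, there exists `y ∈ ℤ^n` with `y ≥ 0` componentwise, `b − y ∈ A·ℤ^n`, and
`∑ k, y k ≤ Δ − 1`. -/
theorem exists_small_residue {n : ℕ} (A : Matrix (Fin n) (Fin n) ℤ) (hA : A.det ≠ 0)
    (b : Fin n → ℤ) :
    ∃ y : Fin n → ℤ, (∀ k, 0 ≤ y k) ∧ (∃ x : Fin n → ℤ, A.mulVec x + y = b) ∧
      (∑ k, y k) ≤ |A.det| - 1 := by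
  set L := (LinearMap.range A.mulVecLin).toAddSubgroup
  have hindex : L.index = A.det.natAbs := A.index_range_mulVecLin hA
  have : L.FiniteIndex := ⟨by rw [hindex]; exact Int.natAbs_ne_zero.mpr hA⟩
  obtain ⟨y, hy_nonneg, ⟨x, hx⟩, hy_sum⟩ := L.exists_nonneg_sub_mem_sum_lt_index b
  refine ⟨y, hy_nonneg, ⟨x, ?_⟩, ?_⟩
  · rw [← mulVecLin_apply, hx, sub_add_cancel]
  · rw [hindex, Int.natCast_natAbs] at hy_sum
    omega
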